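/- arXiv:2011.15101 — 6 statements merged into one kernel-verified Lean document; each statement's English description precedes it below -/
import Mathlib

section
/- Let $\mathcal{M}_i = (S_i, \mathcal{I}_i)$, $1 \le i \le p$, be matroids representable over a common field $\mathbb{F}$, and let $\mathcal{M} = \mathcal{M}_1 \oplus \cdots \oplus \mathcal{M}_p$ be their direct sum. Let $\mathcal{J}$ be any collection of transversal sets (sets containing exactly one element from each $S_i$). Then there exists $\mathcal{J}^* \subseteq \mathcal{J}$ with $|\mathcal{J}^*| \le \prod_{i=1}^p \mathrm{rank}(\mathcal{M}_i)$ such that for every $Y \subseteq S_1 \sqcup \cdots \sqcup S_p$: if some $X \in \mathcal{J}$ is disjoint from $Y$ with $X \cup Y$ independent in $\mathcal{M}$, then some $X^* \in \mathcal{J}^*$ is disjoint from $Y$ with $X^* \cup Y$ independent in $\mathcal{M}$. -/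
/-!
Send a transversal `X` to the pure tensor `⨂ᵢ v i (X i)`; all of these lie in the tensor product
of the spans of the `v i`, of dimension `∏ᵢ rank ℳᵢ`, so a subfamily `𝒥*` whose tensors span
those of `𝒥` has at most that many members. Given `Y` and a good `X ∈ 𝒥`, choose functionals
`φ i` killing `v i '' Y i` but not `v i (X i)`. The functional `⨂ᵢ φ i` is nonzero on the tensor
of `X`, hence on that of some `X* ∈ 𝒥*`, and then each `φ i (v i (X* i)) ≠ 0`, which says that
`X* i ∉ Y i` and `insert (X* i) (Y i)` is independent.
-/

open Module Submodule PiTensorProduct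
open scoped TensorProduct

section Selection

variable {F ι V : Type*} [Field F] [AddCommGroup V] [Module F V]

theorem Finset.exists_subset_card_eq_finrank_span (J : Finset ι) (w : ι → V) :
    ∃ J' ⊆ J, J'.card = finrank F (span F (w '' J)) ∧ span F (w '' J') = span F (w '' J) := by
  obtain ⟨b, hbJ, -, hJb, hb⟩ :=
    exists_linearIndepOn_extension (linearIndepOn_empty F w) (Set.empty_subset (J : Set ι))
  have hb_fin : b.Finite := J.finite_toSet.subset hbJ
  have hspan : span F (w '' b) = span F (w '' J) :=
    le_antisymm (span_mono (Set.image_mono hbJ)) (span_le.2 hJb)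
  refine ⟨hb_fin.toFinset, by simpa using hbJ, ?_, by simpa using hspan⟩
  have := hb_fin.fintype
  rw [← hspan, Set.image_eq_range, finrank_span_eq_card hb, Set.Finite.card_toFinset]

theorem exists_apply_ne_zero_of_mem_span {s : Set V} {x : V} (hx : x ∈ span F s)
    (f : V →ₗ[F] F) (hfx : f x ≠ 0) : ∃ y ∈ s, f y ≠ 0 := by
  by_contra! h
  exact hfx (span_le (p := LinearMap.ker f) |>.2 h hx)

end Selection

section TensorBound

variable {F ι : Type*} [Field F] [Fintype ι] {W : ι → Type*} [∀ i, AddCommGroup (W i)]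
  [∀ i, Module F (W i)]

theorem finrank_piTensorProduct [∀ i, FiniteDimensional F (W i)] :
    finrank F (⨂[F] i, W i) = ∏ i, finrank F (W i) := by
  classical
  simp [finrank_eq_card_basis (Basis.piTensorProduct fun i => finBasis F (W i))]

theorem finrank_span_tprod_le [∀ i, FiniteDimensional F (W i)] {S : ι → Type*}
    (v : ∀ i, S i → W i) (s : Set (∀ i, S i)) :
    finrank F (span F ((fun X => ⨂ₜ[F] i, v i (X i)) '' s)) ≤
      ∏ i, Set.finrank F (Set.range (v i)) := by
  set R := fun i => span F (Set.range (v i))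
  have hle : span F ((fun X => ⨂ₜ[F] i, v i (X i)) '' s) ≤
      LinearMap.range (PiTensorProduct.map fun i => (R i).subtype) := by
    rw [span_le]
    rintro _ ⟨X, -, rfl⟩
    exact ⟨⨂ₜ[F] i, ⟨v i (X i), subset_span (Set.mem_range_self _)⟩, by simp⟩
  calc _ ≤ finrank F (LinearMap.range (PiTensorProduct.map fun i => (R i).subtype)) :=
        finrank_mono hle
    _ ≤ finrank F (⨂[F] i, R i) := LinearMap.finrank_range_le _
    _ = _ := finrank_piTensorProduct

end TensorBound

/-- Independence, in the matroid represented by `v : S → W`, of the finite set `X`. -/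
def RepIndep {F : Type*} [Field F] {S W : Type*} [AddCommGroup W] [Module F W]
    (v : S → W) (X : Finset S) : Prop :=
  LinearIndependent F (fun x : X => v x.1)

section RepIndep

variable {F S W : Type*} [Field F] [DecidableEq S] [AddCommGroup W] [Module F W]
  {v : S → W} {a : S} {Y : Finset S}

theorem repIndep_insert_iff (ha : a ∉ Y) :
    RepIndep (F := F) v (insert a Y) ↔ RepIndep (F := F) v Y ∧ v a ∉ span F (v '' Y) := by
  change LinearIndepOn F v ↑(insert a Y) ↔ LinearIndepOn F v ↑Y ∧ _
  rw [Finset.coe_insert]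
  exact linearIndepOn_insert (mod_cast ha)

theorem repIndep_insert_iff_exists_dual (ha : a ∉ Y) :
    RepIndep (F := F) v (insert a Y) ↔
      RepIndep (F := F) v Y ∧ ∃ φ : Dual F W, (∀ y ∈ Y, φ (v y) = 0) ∧ φ (v a) ≠ 0 := by
  rw [repIndep_insert_iff ha]
  refine and_congr_right fun _ => ⟨fun hspan => ?_, ?_⟩
  · obtain ⟨φ, hφa, hφ⟩ := exists_dual_map_eq_bot_of_notMem hspan inferInstance
    exact ⟨φ, fun y hy => (mem_bot F).1 (hφ ▸ mem_map_of_mem (subset_span ⟨y, hy, rfl⟩)), hφa⟩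
  · rintro ⟨φ, hφY, hφa⟩ hspan
    obtain ⟨_, ⟨y, hy, rfl⟩, hφy⟩ := exists_apply_ne_zero_of_mem_span hspan φ hφa
    exact hφy (hφY y hy)

end RepIndep

/-- Subsets of `⨆ᵢ Sᵢ` are given by their fibers `Y i`, independent in the direct sum iff each
fiber is independent in `ℳᵢ`; transversal sets are encoded as functions `X : Π i, S i`. -/
theorem stmt2 {F : Type*} [Field F] {p : ℕ} {S : Fin p → Type*} [∀ i, DecidableEq (S i)]
    {W : Fin p → Type*} [∀ i, AddCommGroup (W i)] [∀ i, Module F (W i)]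
    [∀ i, FiniteDimensional F (W i)]
    (v : (i : Fin p) → S i → W i)
    (J : Finset ((i : Fin p) → S i)) :
    ∃ Jstar ⊆ J, Jstar.card ≤ ∏ i, Set.finrank F (Set.range (v i)) ∧
      ∀ Y : (i : Fin p) → Finset (S i),
        (∃ X ∈ J, (∀ i, X i ∉ Y i) ∧ ∀ i, RepIndep (F := F) (v i) (insert (X i) (Y i))) →
        (∃ Xstar ∈ Jstar, (∀ i, Xstar i ∉ Y i) ∧
          ∀ i, RepIndep (F := F) (v i) (insert (Xstar i) (Y i))) := by
  set w := fun X : (i : Fin p) → S i => ⨂ₜ[F] i, v i (X i)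
  obtain ⟨Jstar, hJstar, hcard, hspan⟩ := J.exists_subset_card_eq_finrank_span (F := F) w
  refine ⟨Jstar, hJstar, hcard ▸ finrank_span_tprod_le v _, ?_⟩
  rintro Y ⟨X, hXJ, hXY, hXind⟩
  have hdual i := (repIndep_insert_iff_exists_dual (hXY i)).1 (hXind i)
  choose hY φ hφY hφX using hdual
  set Φ := dualDistrib (⨂ₜ[F] i, φ i)
  have hwX : w X ∈ span F (w '' Jstar) := hspan ▸ subset_span ⟨X, hXJ, rfl⟩
  obtain ⟨_, ⟨Xstar, hXstar, rfl⟩, hΦXstar⟩ :=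
    exists_apply_ne_zero_of_mem_span hwX Φ (by simp [Φ, w, Finset.prod_ne_zero_iff, hφX])
  have hφXstar : ∀ i, φ i (v i (Xstar i)) ≠ 0 := by
    simpa [Φ, w, Finset.prod_ne_zero_iff] using hΦXstar
  have hXstarY i : Xstar i ∉ Y i := fun h => hφXstar i (hφY i _ h)
  exact ⟨Xstar, hXstar, hXstarY, fun i =>
    (repIndep_insert_iff_exists_dual (hXstarY i)).2 ⟨hY i, φ i, hφY i, hφXstar i⟩⟩
end

section
/- Given a bipartite graph $G = (A, B)$, the pair $(B, \mathcal{I})$, where $X \subseteq B$ is in $\mathcal{I}$ iff there is a matching in $G$ covering $X$, is a matroid (the transversal matroid). -/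
/-!
Given matchings `f` of `I` and `g` of `J` with `|I| < |J|`, the set `g '' J` is larger than
`f '' I`, so some `y ∈ J` has `g y ∉ f '' I`. If `y ∉ I`, reassigning `y` to `g y` matches
`insert y I`. If `y ∈ I`, the same reassignment is a matching of `I` that agrees with `g` at one
more point of `I ∩ J`, and we conclude by induction on the number of disagreements.
-/

open Set Function

section Transversal

variable {A B : Type*}

def IsMatchable (adj : A → B → Prop) (X : Set B) : Prop :=
  ∃ f : X → A, Injective f ∧ ∀ x : X, adj (f x) x

section

variable {adj : A → B → Prop} {X Y : Set B}

theorem isMatchable_empty : IsMatchable adj ∅ :=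
  ⟨fun x => x.2.elim, fun x => x.2.elim, fun x => x.2.elim⟩

theorem IsMatchable.mono (hY : IsMatchable adj Y) (hXY : X ⊆ Y) : IsMatchable adj X := by
  obtain ⟨f, hf, hadj⟩ := hY
  exact ⟨f ∘ inclusion hXY, hf.comp (inclusion_injective hXY), fun x => hadj (inclusion hXY x)⟩

theorem IsMatchable.of_injOn {f : B → A} (hf : InjOn f X) (hadj : ∀ x ∈ X, adj (f x) x) :
    IsMatchable adj X :=
  ⟨X.domRestrict f, hf.injective, fun x => hadj x x.2⟩

theorem IsMatchable.exists_injOn [Nonempty A] (hX : IsMatchable adj X) :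
    ∃ f : B → A, InjOn f X ∧ ∀ x ∈ X, adj (f x) x := by
  classical
  obtain ⟨f, hf, hadj⟩ := hX
  refine ⟨fun b => if h : b ∈ X then f ⟨b, h⟩ else Classical.arbitrary A, ?_, ?_⟩
  · intro b hb b' hb' h
    simp only [dif_pos hb, dif_pos hb'] at h
    exact congrArg Subtype.val (hf h)
  · intro b hb
    simpa only [dif_pos hb] using hadj ⟨b, hb⟩

end

theorem Set.InjOn.update_insert [DecidableEq B] {f : B → A} {s : Set B} {a : A} (y : B)
    (hf : InjOn f s) (ha : a ∉ f '' s) : InjOn (update f y a) (insert y s) := by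
  rw [← insert_sdiff_singleton (s := s) (a := y),
    injOn_insert (notMem_sdiff_of_mem (mem_singleton y)), update_self]
  have heq : EqOn (update f y a) f (s \ {y}) := fun x hx => update_of_ne hx.2 a f
  rw [heq.image_eq]
  exact ⟨(hf.mono sdiff_subset).congr heq.symm, fun h => ha (image_mono sdiff_subset h)⟩

theorem exists_insert_injOn_of_ncard_lt [Finite B] {adj : A → B → Prop} {f g : B → A}
    {I J : Set B} (hf : InjOn f I) (hfI : ∀ x ∈ I, adj (f x) x) (hg : InjOn g J)
    (hgJ : ∀ x ∈ J, adj (g x) x) (hIJ : I.ncard < J.ncard) :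
    ∃ e ∈ J, e ∉ I ∧ ∃ h : B → A, InjOn h (insert e I) ∧ ∀ x ∈ insert e I, adj (h x) x := by
  classical
  induction hn : {x ∈ I ∩ J | f x ≠ g x}.ncard using Nat.strong_induction_on generalizing f with
  | _ n ih =>
  have hfg : (f '' I).ncard < (g '' J).ncard := by
    rw [hg.ncard_image]
    exact (ncard_image_le (toFinite I)).trans_lt hIJ
  obtain ⟨-, ⟨y, hyJ, rfl⟩, hy⟩ := exists_mem_notMem_of_ncard_lt_ncard hfg
  set f' := update f y (g y)
  have hf' : InjOn f' (insert y I) := hf.update_insert y hy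
  have hf'I : ∀ x ∈ insert y I, adj (f' x) x := by
    intro x hx
    rcases eq_or_ne x y with rfl | hxy
    · simpa [f'] using hgJ x hyJ
    · simpa [f', update_of_ne hxy] using hfI x (hx.resolve_left hxy)
  by_cases hyI : y ∈ I
  · have hfewer : {x ∈ I ∩ J | f' x ≠ g x}.ncard < n := by
      have hfy : f y ≠ g y := fun h => hy ⟨y, hyI, h⟩
      have hsub : {x ∈ I ∩ J | f' x ≠ g x} ⊂ {x ∈ I ∩ J | f x ≠ g x} := by
        refine ⟨fun x ⟨hx, hne⟩ => ⟨hx, fun h => hne ?_⟩, fun h => (h ⟨⟨hyI, hyJ⟩, hfy⟩).2 ?_⟩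
        · rcases eq_or_ne x y with rfl | hxy
          · simp [f']
          · simpa [f', update_of_ne hxy] using h
        · simp [f']
      exact hn ▸ ncard_lt_ncard hsub (toFinite _)
    exact ih _ hfewer (hf'.mono (subset_insert y I)) (fun x hx => hf'I x (.inr hx)) rfl
  · exact ⟨y, hyJ, hyI, f', hf', hf'I⟩

end Transversal

theorem stmt4_general {A B : Type*} [Fintype B] (adj : A → B → Prop) :
    ∃ M : Matroid B, M.E = Set.univ ∧
      ∀ X : Set B, M.Indep X ↔
        ∃ f : X → A, Function.Injective f ∧ ∀ x : X, adj (f x) x.1 := by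
  refine ⟨(IndepMatroid.ofFinite finite_univ (IsMatchable adj) isMatchable_empty
    (fun _ _ hJ hIJ => hJ.mono hIJ) ?_ (fun I _ => subset_univ I)).matroid, rfl, fun X => Iff.rfl⟩
  intro I J hI hJ hIJ
  obtain ⟨y, hy⟩ := nonempty_of_ncard_ne_zero (hIJ.trans_le' (Nat.zero_le _)).ne'
  have : Nonempty A := ⟨hJ.choose ⟨y, hy⟩⟩
  obtain ⟨f, hf, hfI⟩ := hI.exists_injOn
  obtain ⟨g, hg, hgJ⟩ := hJ.exists_injOn
  obtain ⟨e, heJ, heI, h, hh, hhI⟩ := exists_insert_injOn_of_ncard_lt hf hfI hg hgJ hIJ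
  exact ⟨e, heJ, heI, .of_injOn hh hhI⟩

/-- given a (finite) bipartite graph with sides `A`, `B` and adjacency
relation `adj`, there is a matroid on `B` whose independent sets are exactly the subsets
`X ⊆ B` covered by some matching (equivalently, the sets admitting an injection `f` into
`A` with `f x` adjacent to `x` for all `x ∈ X`): the transversal matroid. -/
theorem stmt4 {A B : Type*} [Fintype A] [Fintype B] (adj : A → B → Prop) :
    ∃ M : Matroid B, M.E = Set.univ ∧
      ∀ X : Set B, M.Indep X ↔
        ∃ f : X → A, Function.Injective f ∧ ∀ x : X, adj (f x) x.1 :=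
  stmt4_general adj
end

section
/- In a directed graph $G$ with disjoint vertex sets $A$ and $B$, if $C$ is a minimum vertex cut between $A$ and $B$ of size $k$, then there exist $k$ vertex-disjoint paths from $A$ to $C$ (each path ending at a distinct vertex of $C$), and $k$ vertex-disjoint paths from $C$ to $B$. -/
/-- `b` is reachable from `a` by a directed path avoiding the vertex set `C`. -/
def Reaches {V : Type*} (adj : V → V → Prop) (C : Finset V) (a b : V) : Prop :=
  Relation.ReflTransGen (fun u v => adj u v ∧ u ∉ C ∧ v ∉ C) a b

/-- `C` is a vertex cut between `A` and `B`: no directed path from `A` to `B` survives the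
removal of `C` (note that `C` may intersect `A ∪ B`). -/
def IsVertexCut {V : Type*} (adj : V → V → Prop) (A B C : Finset V) : Prop :=
  ∀ a ∈ A, ∀ b ∈ B, a ∉ C → b ∉ C → ¬ Reaches adj C a b

/-- `P` is a (simple, directed) path starting in `S` and ending in `T`. -/
def IsPathFrom {V : Type*} (adj : V → V → Prop) (S T : Finset V) (P : List V) : Prop :=
  P ≠ [] ∧ P.Chain' adj ∧ P.Nodup ∧
    (∃ a ∈ S, P.head? = some a) ∧ ∃ b ∈ T, P.getLast? = some b

/-- A family of pairwise vertex-disjoint paths. -/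
def DisjointPaths {V : Type*} {m : ℕ} (Ps : Fin m → List V) : Prop :=
  ∀ i j, i ≠ j → (Ps i).Disjoint (Ps j)

/-!
Menger's theorem by induction on the number of edges. Let `k` be at most the size of every
`A`–`B` cut and let `uv` be an edge. If every `A`–`B` cut of `G - uv` still has at least `k`
vertices, induct. Otherwise some cut `S` of `G - uv` has fewer than `k` vertices; `S + u` and
`S + v` are then minimum `A`–`B` cuts of `G`, and induction gives `k` disjoint paths from `A` to
`S + u` and `k` disjoint paths from `S + v` to `B` in `G - uv`. Cut at their first (resp. last)
vertex in these sets, a path of the first family and one of the second can only meet in `S`,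
because `S` separates `A` from `B` in `G - uv`. Joining them along `S`, and through the edge
`uv`, gives `k` disjoint `A`–`B` paths.

If `C` is a minimum cut, every `A`–`C` cut is an `A`–`B` cut, so Menger's theorem gives the
paths from `A` to `C`; the paths from `C` to `B` are the same statement for the reversed graph.
-/

open Function

section

variable {V : Type*} {adj adj' : V → V → Prop} {A B C D S T : Finset V} {a b u v x : V}
  {P X Y : List V}

theorem reaches_flip : Reaches (flip adj) C a b ↔ Reaches adj C b a := by
  have : (fun x y => flip adj x y ∧ x ∉ C ∧ y ∉ C) =
      swap fun x y => adj x y ∧ x ∉ C ∧ y ∉ C := by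
    ext x y
    simp only [flip, swap]
    tauto
  rw [Reaches, Reaches, this, Relation.reflTransGen_swap]

theorem isVertexCut_flip : IsVertexCut (flip adj) B A C ↔ IsVertexCut adj A B C := by
  simp only [IsVertexCut, reaches_flip]
  exact ⟨fun h a ha b hb haC hbC => h b hb a ha hbC haC,
    fun h b hb a ha hbC haC => h a ha b hb haC hbC⟩

theorem isPathFrom_reverse : IsPathFrom (flip adj) B A P.reverse ↔ IsPathFrom adj A B P :=
  and_congr List.reverse_eq_nil_iff.not <| and_congr List.isChain_reverse <|
    and_congr List.nodup_reverse <| by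
      simp only [List.head?_reverse, List.getLast?_reverse]
      exact and_comm

theorem disjointPaths_reverse {m : ℕ} {Ps : Fin m → List V} :
    DisjointPaths (fun i => (Ps i).reverse) ↔ DisjointPaths Ps := by
  simp only [DisjointPaths, List.disjoint_reverse_left, List.disjoint_reverse_right]

theorem reaches_of_isChain (hP : P.IsChain adj) (hS : ∀ y ∈ P, y ∉ S) (ha : P.head? = some a)
    (hb : P.getLast? = some b) : Reaches adj S a b := by
  have hne : P ≠ [] := by rintro rfl; simp at ha
  rw [List.head?_eq_some_head hne, Option.some_inj] at ha
  rw [List.getLast?_eq_some_getLast hne, Option.some_inj] at hb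
  subst ha hb
  exact List.relationReflTransGen_of_exists_isChain P
    (hP.imp_of_mem_imp fun x y hx hy h => ⟨h, hS x hx, hS y hy⟩) hne

theorem IsVertexCut.mono (hS : IsVertexCut adj' A B S) (hSD : S ⊆ D)
    (hadj : ∀ x y, adj x y → x ∉ D → y ∉ D → adj' x y) : IsVertexCut adj A B D :=
  fun a ha b hb haD hbD hr => hS a ha b hb (fun h => haD (hSD h)) (fun h => hbD (hSD h)) <|
    Relation.ReflTransGen.mono (fun x y ⟨h, hx, hy⟩ =>
      ⟨hadj x y h hx hy, fun h => hx (hSD h), fun h => hy (hSD h)⟩) _ _ hr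

theorem IsVertexCut.of_isVertexCut_left (hD : IsVertexCut adj A B D)
    (hT : IsVertexCut adj' A D T) (hadj : ∀ x y, adj x y → x ∉ D → adj' x y) :
    IsVertexCut adj A B T := by
  intro a ha b hb haT hbT hr
  suffices ∀ z, Reaches adj T a z → (∃ c ∈ D, c ∉ T ∧ Reaches adj' T a c) ∨
      (a ∉ D ∧ z ∉ D ∧ Reaches adj D a z ∧ Reaches adj' T a z) by
    rcases this b hr with ⟨c, hcD, hcT, hac⟩ | ⟨haD, hbD, hab, -⟩
    · exact hT a ha c hcD haT hcT hac
    · exact hD a ha b hb haD hbD hab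
  intro z hz
  induction hz with
  | refl =>
    by_cases haD : a ∈ D
    · exact .inl ⟨a, haD, haT, .refl⟩
    · exact .inr ⟨haD, haD, .refl, .refl⟩
  | @tail y z _ hyz ih =>
    obtain ⟨hyz, hyT, hzT⟩ := hyz
    rcases ih with hc | ⟨haD, hyD, hayD, hayT⟩
    · exact .inl hc
    have hyz' : adj' y z := hadj y z hyz hyD
    by_cases hzD : z ∈ D
    · exact .inl ⟨z, hzD, hzT, hayT.tail ⟨hyz', hyT, hzT⟩⟩
    · exact .inr ⟨haD, hzD, hayD.tail ⟨hyz, hyD, hzD⟩, hayT.tail ⟨hyz', hyT, hzT⟩⟩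

theorem IsVertexCut.of_isVertexCut_right (hD : IsVertexCut adj A B D)
    (hT : IsVertexCut adj' D B T) (hadj : ∀ x y, adj x y → y ∉ D → adj' x y) :
    IsVertexCut adj A B T :=
  isVertexCut_flip.mp <| (isVertexCut_flip.mpr hD).of_isVertexCut_left
    (isVertexCut_flip.mpr hT) fun x y h hy => hadj y x h hy

theorem IsPathFrom.mono (h : IsPathFrom adj A B P) (hadj : ∀ x y, adj x y → adj' x y) :
    IsPathFrom adj' A B P :=
  ⟨h.1, List.IsChain.imp hadj h.2.1, h.2.2⟩

theorem IsPathFrom.exists_prefix_notMem [DecidableEq V] (h : IsPathFrom adj A D P) :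
    ∃ X e, X ++ [e] <+: P ∧ IsPathFrom adj A D (X ++ [e]) ∧ ∀ x ∈ X, x ∉ D := by
  obtain ⟨-, hchain, hnodup, ⟨a, haA, ha⟩, b, hbD, hb⟩ := h
  obtain ⟨e, X, Z, hX, he, rfl, -⟩ :=
    List.exists_of_eraseP (p := fun x => decide (x ∈ D)) (List.mem_of_getLast? hb)
      (decide_eq_true hbD)
  have hpre : X ++ [e] <+: X ++ e :: Z := ⟨Z, by simp⟩
  refine ⟨X, e, hpre, ⟨by simp, List.IsChain.prefix hchain hpre, hnodup.sublist hpre.sublist,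
    ⟨a, haA, ?_⟩, e, of_decide_eq_true he, by simp⟩, fun x hx => by simpa using hX x hx⟩
  cases X <;> simpa using ha

theorem IsPathFrom.exists_suffix_notMem [DecidableEq V] (h : IsPathFrom adj D B P) :
    ∃ f Y, f :: Y <:+ P ∧ IsPathFrom adj D B (f :: Y) ∧ ∀ y ∈ Y, y ∉ D := by
  obtain ⟨X, f, hpre, hpath, hX⟩ := (isPathFrom_reverse.mpr h).exists_prefix_notMem
  refine ⟨f, X.reverse, ?_, ?_, fun y hy => hX y (List.mem_reverse.mp hy)⟩
  · simpa using List.reverse_prefix.mp (by simpa using hpre)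
  · exact isPathFrom_reverse.mp (by simpa using hpath)

theorem IsPathFrom.last_mem {e : V} (h : IsPathFrom adj A D (X ++ [e])) : e ∈ D := by
  obtain ⟨-, -, -, -, d, hd, h⟩ := h
  simp only [List.getLast?_append, List.getLast?_singleton, Option.some_or,
    Option.some_inj] at h
  exact h ▸ hd

theorem IsPathFrom.head_mem {f : V} (h : IsPathFrom adj D B (f :: Y)) : f ∈ D := by
  obtain ⟨-, -, -, ⟨d, hd, h⟩, -⟩ := h
  exact Option.some_inj.mp h ▸ hd

theorem IsPathFrom.append_cons {M N : Finset V} (hP : IsPathFrom adj A M (X ++ [x]))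
    (hQ : IsPathFrom adj N B (x :: Y)) (hXY : ∀ y ∈ X, y ∉ x :: Y) :
    IsPathFrom adj A B (X ++ x :: Y) := by
  obtain ⟨-, hPc, hPn, ⟨a, haA, ha⟩, -⟩ := hP
  obtain ⟨-, hQc, hQn, -, b, hbB, hb⟩ := hQ
  refine ⟨by simp, ?_, List.nodup_append.mpr ⟨(List.nodup_append.mp hPn).1, hQn, ?_⟩,
    ⟨a, haA, ?_⟩, b, hbB, ?_⟩
  · have := List.IsChain.append_overlap (l₃ := Y) hPc hQc (List.cons_ne_nil x [])
    simp only [List.append_assoc, List.singleton_append] at this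
    exact this
  · exact fun y hy z hz hyz => hXY y hy (hyz ▸ hz)
  · cases X <;> simpa using ha
  · rwa [List.getLast?_append_of_ne_nil _ (List.cons_ne_nil _ _)]

theorem IsPathFrom.cons {M N : Finset V} (hQ : IsPathFrom adj N B (v :: Y)) (huv : adj u v)
    (hu : u ∉ v :: Y) (huM : u ∈ M) : IsPathFrom adj M B (u :: v :: Y) := by
  obtain ⟨-, hQc, hQn, -, b, hbB, hb⟩ := hQ
  exact ⟨List.cons_ne_nil _ _, List.IsChain.cons_cons huv hQc, List.Nodup.cons hu hQn,
    ⟨u, huM, rfl⟩, b, hbB, by rwa [List.getLast?_cons_cons]⟩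

theorem IsPathFrom.exists_reaches_of_mem {e : V} (hP : IsPathFrom adj A D (X ++ [e]))
    (hX : ∀ y ∈ X, y ∉ S) (hx : x ∈ X ++ [e]) (hxS : x ∉ S) :
    ∃ a ∈ A, a ∉ S ∧ Reaches adj S a x := by
  obtain ⟨-, hchain, -, ⟨a, haA, ha⟩, -⟩ := hP
  obtain ⟨L, hL, hLS⟩ : ∃ L, L ++ [x] <+: X ++ [e] ∧ ∀ y ∈ L, y ∉ S := by
    rcases List.mem_append.mp hx with hx | hx
    · obtain ⟨L, M, rfl⟩ := List.append_of_mem hx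
      exact ⟨L, ⟨M ++ [e], by simp⟩, fun y hy => hX y (by simp [hy])⟩
    · obtain rfl := List.mem_singleton.mp hx
      exact ⟨X, List.prefix_refl _, hX⟩
  have hLS' : ∀ y ∈ L ++ [x], y ∉ S :=
    List.forall_mem_append.mpr ⟨hLS, by simpa using hxS⟩
  have hLa : (L ++ [x]).head? = some a := by
    obtain ⟨M, hM⟩ := hL
    rwa [← hM, List.head?_append_of_ne_nil _ (by simp)] at ha
  exact ⟨a, haA, hLS' a (List.mem_of_mem_head? hLa),
    reaches_of_isChain (List.IsChain.prefix hchain hL) hLS' hLa (by simp)⟩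

theorem IsPathFrom.exists_reaches_of_mem_cons {f : V} (hQ : IsPathFrom adj D B (f :: Y))
    (hY : ∀ y ∈ Y, y ∉ S) (hx : x ∈ f :: Y) (hxS : x ∉ S) :
    ∃ b ∈ B, b ∉ S ∧ Reaches adj S x b := by
  have hQ' : IsPathFrom (flip adj) B D (Y.reverse ++ [f]) := by
    simpa using isPathFrom_reverse.mpr hQ
  obtain ⟨b, hbB, hbS, hb⟩ := hQ'.exists_reaches_of_mem (by simpa using hY)
    (by simpa [or_comm] using hx) hxS
  exact ⟨b, hbB, hbS, reaches_flip.mp hb⟩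

theorem IsVertexCut.mem_of_mem_of_mem {D D' : Finset V} {e f : V} (hS : IsVertexCut adj A B S)
    (hP : IsPathFrom adj A D (X ++ [e])) (hX : ∀ y ∈ X, y ∉ S)
    (hQ : IsPathFrom adj D' B (f :: Y)) (hY : ∀ y ∈ Y, y ∉ S)
    (hxP : x ∈ X ++ [e]) (hxQ : x ∈ f :: Y) : x ∈ S := by
  by_contra hxS
  obtain ⟨a, haA, haS, hax⟩ := hP.exists_reaches_of_mem hX hxP hxS
  obtain ⟨b, hbB, hbS, hxb⟩ := hQ.exists_reaches_of_mem_cons hY hxQ hxS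
  exact hS a haA b hbB haS hbS (hax.trans hxb)

theorem DisjointPaths.mono {m : ℕ} {Ps Qs : Fin m → List V} (h : DisjointPaths Ps)
    (hsub : ∀ i, Qs i ⊆ Ps i) : DisjointPaths Qs :=
  fun i j hij =>
    List.disjoint_of_subset_left (hsub i) (List.disjoint_of_subset_right (hsub j) (h i j hij))

theorem DisjointPaths.injective_of_mem {m : ℕ} {Ps : Fin m → List V} {g : Fin m → V}
    (h : DisjointPaths Ps) (hg : ∀ i, g i ∈ Ps i) : Injective g :=
  fun i j hij => by_contra fun hne => h i j hne (hg i) (hij ▸ hg j)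

theorem DisjointPaths.injective_getLast? {m : ℕ} {Ps : Fin m → List V} (h : DisjointPaths Ps)
    (hne : ∀ i, Ps i ≠ []) : Injective fun i => (Ps i).getLast? := by
  convert (Option.some_injective V).comp (h.injective_of_mem fun i => List.getLast_mem (hne i))
    using 2 with i
  exact List.getLast?_eq_some_getLast (hne i)

theorem exists_injective_comp_eq {k : ℕ} {f g : Fin k → V} (hf : Injective f)
    (hfD : ∀ j, f j ∈ D) (hD : D.card ≤ k) (hg : Injective g) (hgD : ∀ i, g i ∈ D) :
    ∃ σ : Fin k → Fin k, Injective σ ∧ ∀ i, f (σ i) = g i := by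
  have hsurj := Finset.surjOn_of_injOn_of_card_le (s := Finset.univ) f (fun j _ => hfD j)
    hf.injOn (by simpa using hD)
  choose σ _ hσ using fun i => hsurj (Finset.mem_coe.mpr (hgD i))
  exact ⟨σ, fun i i' h => hg (by rw [← hσ, ← hσ, h]), hσ⟩

theorem swap_apply_mem_insert [DecidableEq V] (hu : u ∉ S) (hv : v ∉ S)
    (hx : x ∈ insert u S) : Equiv.swap u v x ∈ insert v S := by
  rcases Finset.mem_insert.mp hx with rfl | hxS
  · simp
  · rw [Equiv.swap_apply_of_ne_of_ne (ne_of_mem_of_not_mem hxS hu) (ne_of_mem_of_not_mem hxS hv)]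
    exact Finset.mem_insert_of_mem hxS

theorem exists_disjointPaths_of_forall_not_adj {k : ℕ} (hadj : ∀ x y, ¬adj x y)
    (hk : ∀ T, IsVertexCut adj A B T → k ≤ T.card) :
    ∃ Ps : Fin k → List V, (∀ i, IsPathFrom adj A B (Ps i)) ∧ DisjointPaths Ps := by
  classical
  have hcut : IsVertexCut adj A B (A ∩ B) := by
    intro a ha b hb haAB _ hab
    obtain rfl : b = a := (Relation.reflTransGen_iff_eq fun c h => hadj a c h.1).mp hab
    exact haAB (Finset.mem_inter.mpr ⟨ha, hb⟩)
  obtain ⟨g, hg⟩ := Function.Embedding.exists_of_card_le_finset (α := Fin k) (s := A ∩ B)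
    (by simpa using hk _ hcut)
  refine ⟨fun i => [g i], fun i => ?_, fun i j hij => ?_⟩
  · obtain ⟨hA, hB⟩ := Finset.mem_inter.mp (hg ⟨i, rfl⟩)
    exact ⟨List.cons_ne_nil _ _, List.isChain_singleton _, List.nodup_singleton _,
      ⟨g i, hA, rfl⟩, g i, hB, rfl⟩
  · simpa using g.injective.ne hij.symm

theorem exists_disjointPaths_of_join {k : ℕ} {X W : Fin k → List V} {e : Fin k → V}
    {M : Finset V} (hP : ∀ i, IsPathFrom adj A M (X i ++ [e i]))
    (hW : ∀ i, ∃ N, IsPathFrom adj N B (e i :: W i))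
    (hPdisj : DisjointPaths fun i => X i ++ [e i]) (hWdisj : DisjointPaths W)
    (hPW : ∀ i i', ∀ x ∈ X i ++ [e i], x ∉ W i') :
    ∃ Rs : Fin k → List V, (∀ i, IsPathFrom adj A B (Rs i)) ∧ DisjointPaths Rs := by
  refine ⟨fun i => X i ++ [e i] ++ W i, fun i => ?_, fun i i' hii' x hx hx' => ?_⟩
  · obtain ⟨N, hN⟩ := hW i
    simp only [List.append_assoc, List.singleton_append]
    refine (hP i).append_cons hN fun y hy hy' => ?_
    rcases List.mem_cons.mp hy' with rfl | hy'
    · exact (List.nodup_append.mp (hP i).2.2.1).2.2 _ hy _ (List.mem_singleton_self _) rfl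
    · exact hPW i i y (by simp [hy]) hy'
  · rcases List.mem_append.mp hx with hx | hx <;> rcases List.mem_append.mp hx' with hx' | hx'
    · exact hPdisj i i' hii' hx hx'
    · exact hPW i i' x hx hx'
    · exact hPW i' i x hx' hx
    · exact hWdisj i i' hii' hx hx'

def deleteEdge (adj : V → V → Prop) (u v : V) : V → V → Prop :=
  fun x y => adj x y ∧ ¬(x = u ∧ y = v)

theorem deleteEdge_of_ne_left (h : adj x y) (hx : x ≠ u) : deleteEdge adj u v x y :=
  ⟨h, fun h' => hx h'.1⟩

theorem deleteEdge_of_ne_right (h : adj x y) (hy : y ≠ v) : deleteEdge adj u v x y :=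
  ⟨h, fun h' => hy h'.2⟩

/-- `σ` matches the path ending at `u` with the path starting at `v`, to be joined through the
edge `uv`, and every other path with the path starting at its endpoint in `S`. -/
theorem exists_disjointPaths_of_link [DecidableEq V] {k : ℕ} {X Y : Fin k → List V}
    {e f : Fin k → V} {σ : Fin k → Fin k} (hadj : ∀ x y, adj' x y → adj x y)
    (huv : adj u v) (hS : IsVertexCut adj' A B S) (hu : u ∉ S) (hv : v ∉ S)
    (hP : ∀ i, IsPathFrom adj' A (insert u S) (X i ++ [e i])) (hX : ∀ i, ∀ x ∈ X i, x ∉ S)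
    (hPdisj : DisjointPaths fun i => X i ++ [e i])
    (hQ : ∀ j, IsPathFrom adj' (insert v S) B (f j :: Y j)) (hY : ∀ j, ∀ y ∈ Y j, y ∉ S)
    (hQdisj : DisjointPaths fun j => f j :: Y j)
    (hσ : Injective σ) (hfσ : ∀ i, f (σ i) = Equiv.swap u v (e i)) :
    ∃ Rs : Fin k → List V, (∀ i, IsPathFrom adj A B (Rs i)) ∧ DisjointPaths Rs := by
  have key : ∀ i j x, x ∈ X i ++ [e i] → x ∈ f j :: Y j → x ∈ S := fun i j x =>
    hS.mem_of_mem_of_mem (hP i) (hX i) (hQ j) (hY j)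
  have hfσu : ∀ i, e i = u → f (σ i) = v := fun i heu => by
    rw [hfσ, heu, Equiv.swap_apply_left]
  have hfσS : ∀ i, e i ≠ u → f (σ i) = e i := fun i heu => by
    have heS := (Finset.mem_insert.mp (hP i).last_mem).resolve_left heu
    rw [hfσ, Equiv.swap_apply_of_ne_of_ne heu (ne_of_mem_of_not_mem heS hv)]
  set W : Fin k → List V := fun i => if e i = u then f (σ i) :: Y (σ i) else Y (σ i)
  have hWQ : ∀ i, W i ⊆ f (σ i) :: Y (σ i) := fun i => by
    simp only [W]
    split_ifs
    · exact List.Subset.refl _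
    · exact List.subset_cons_self _ _
  have hWS : ∀ i, ∀ x ∈ W i, x ∉ S := fun i x hx => by
    simp only [W] at hx
    split_ifs at hx with heu
    · rcases List.mem_cons.mp hx with rfl | hx
      · rwa [hfσu i heu]
      · exact hY _ x hx
    · exact hY _ x hx
  have hEW : ∀ i, ∃ N, IsPathFrom adj N B (e i :: W i) := fun i => by
    have hQσ := (hQ (σ i)).mono hadj
    simp only [W]
    split_ifs with heu
    · rw [hfσu i heu] at hQσ ⊢
      rw [heu]
      refine ⟨{u}, hQσ.cons huv (fun hu' => hu ?_) (Finset.mem_singleton_self u)⟩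
      exact key i (σ i) u (by simp [heu]) (by rwa [hfσu i heu])
    · rw [hfσS i heu] at hQσ
      exact ⟨_, hQσ⟩
  exact exists_disjointPaths_of_join (fun i => (hP i).mono hadj) hEW hPdisj
    (DisjointPaths.mono (fun i i' hii' => hQdisj _ _ (hσ.ne hii')) hWQ)
    fun i i' x hxP hxW => hWS i' x hxW (key i (σ i') x hxP (hWQ i' hxW))

theorem exists_disjointPaths_of_deleteEdge [DecidableEq V] {k : ℕ}
    (hk : ∀ T, IsVertexCut adj A B T → k ≤ T.card) (huv : adj u v)
    (hS : IsVertexCut (deleteEdge adj u v) A B S) (hSk : S.card < k)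
    (ih : ∀ A' B' : Finset V,
      (∀ T, IsVertexCut (deleteEdge adj u v) A' B' T → k ≤ T.card) →
      ∃ Ps : Fin k → List V,
        (∀ i, IsPathFrom (deleteEdge adj u v) A' B' (Ps i)) ∧ DisjointPaths Ps) :
    ∃ Ps : Fin k → List V, (∀ i, IsPathFrom adj A B (Ps i)) ∧ DisjointPaths Ps := by
  have hne_of_notMem : ∀ {w x : V}, x ∉ insert w S → x ≠ w := fun hx h =>
    hx (h ▸ Finset.mem_insert_self _ S)
  have hDu : IsVertexCut adj A B (insert u S) := hS.mono (Finset.subset_insert u S)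
    fun _ _ h hx _ => deleteEdge_of_ne_left h (hne_of_notMem hx)
  have hDv : IsVertexCut adj A B (insert v S) := hS.mono (Finset.subset_insert v S)
    fun _ _ h _ hy => deleteEdge_of_ne_right h (hne_of_notMem hy)
  have hnotMem : ∀ {w}, IsVertexCut adj A B (insert w S) → w ∉ S := fun hw hwS =>
    ((hk _ hw).trans_lt (by rwa [Finset.insert_eq_of_mem hwS])).false
  have hu := hnotMem hDu
  have hv := hnotMem hDv
  obtain ⟨Ps, hPs, hPdisj⟩ := ih A (insert u S) fun T hT => hk T <|
    hDu.of_isVertexCut_left hT fun _ _ h hx => deleteEdge_of_ne_left h (hne_of_notMem hx)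
  obtain ⟨Qs, hQs, hQdisj⟩ := ih (insert v S) B fun T hT => hk T <|
    hDv.of_isVertexCut_right hT fun _ _ h hy => deleteEdge_of_ne_right h (hne_of_notMem hy)
  choose X e hXP hX hXS using fun i => (hPs i).exists_prefix_notMem
  choose f Y hYQ hY hYS using fun j => (hQs j).exists_suffix_notMem
  replace hPdisj := hPdisj.mono fun i => (hXP i).subset
  replace hQdisj := hQdisj.mono fun j => (hYQ j).subset
  obtain ⟨σ, hσ, hfσ⟩ := exists_injective_comp_eq (g := Equiv.swap u v ∘ e)
    (hQdisj.injective_of_mem fun _ => List.mem_cons_self) (fun j => (hY j).head_mem)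
    (by rw [Finset.card_insert_of_notMem hv]; omega)
    ((Equiv.injective _).comp (hPdisj.injective_of_mem fun _ => List.mem_concat_self))
    fun i => swap_apply_mem_insert hu hv (hX i).last_mem
  exact exists_disjointPaths_of_link (fun _ _ h => h.1) huv hS hu hv hX
    (fun i x hx hxS => hXS i x hx (Finset.mem_insert_of_mem hxS)) hPdisj hY
    (fun j y hy hyS => hYS j y hy (Finset.mem_insert_of_mem hyS)) hQdisj hσ hfσ

theorem exists_disjointPaths_of_le_card_cut [Finite V] (adj : V → V → Prop) (A B : Finset V)
    (k : ℕ) (hk : ∀ T, IsVertexCut adj A B T → k ≤ T.card) :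
    ∃ Ps : Fin k → List V, (∀ i, IsPathFrom adj A B (Ps i)) ∧ DisjointPaths Ps := by
  classical
  induction hn : {p : V × V | adj p.1 p.2}.ncard using Nat.strong_induction_on
    generalizing adj A B with
  | _ n ih =>
  by_cases hadj : ∃ u v, adj u v
  · obtain ⟨u, v, huv⟩ := hadj
    have hlt : {p : V × V | deleteEdge adj u v p.1 p.2}.ncard < n :=
      hn ▸ Set.ncard_lt_ncard ⟨fun p hp => hp.1,
        fun h => (h (show (u, v) ∈ {p : V × V | adj p.1 p.2} from huv)).2 ⟨rfl, rfl⟩⟩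
    have ih' := fun A' B' hk' => ih _ hlt (deleteEdge adj u v) A' B' hk' rfl
    by_cases hcut : ∀ T, IsVertexCut (deleteEdge adj u v) A B T → k ≤ T.card
    · obtain ⟨Ps, hPs, hdisj⟩ := ih' A B hcut
      exact ⟨Ps, fun i => (hPs i).mono fun _ _ h => h.1, hdisj⟩
    · push Not at hcut
      obtain ⟨S, hS, hSk⟩ := hcut
      exact exists_disjointPaths_of_deleteEdge hk huv hS hSk ih'
  · exact exists_disjointPaths_of_forall_not_adj (fun x y h => hadj ⟨x, y, h⟩) hk

theorem IsVertexCut.exists_disjointPaths_to [Finite V] (hC : IsVertexCut adj A B C)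
    (hmin : ∀ C', IsVertexCut adj A B C' → C.card ≤ C'.card) :
    ∃ Ps : Fin C.card → List V, (∀ i, IsPathFrom adj A C (Ps i)) ∧ DisjointPaths Ps ∧
      Injective fun i => (Ps i).getLast? := by
  obtain ⟨Ps, hPs, hdisj⟩ := exists_disjointPaths_of_le_card_cut adj A C C.card fun T hT =>
    hmin T (hC.of_isVertexCut_left hT fun _ _ h _ => h)
  exact ⟨Ps, hPs, hdisj, hdisj.injective_getLast? fun i => (hPs i).1⟩

end

theorem stmt9_general {V : Type*} [Fintype V] (adj : V → V → Prop)
    (A B C : Finset V)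
    (hcut : IsVertexCut adj A B C)
    (hmin : ∀ C' : Finset V, IsVertexCut adj A B C' → C.card ≤ C'.card) :
    (∃ Ps : Fin C.card → List V,
      (∀ i, IsPathFrom adj A C (Ps i)) ∧ DisjointPaths Ps ∧
        Function.Injective (fun i => (Ps i).getLast?)) ∧
    (∃ Qs : Fin C.card → List V,
      (∀ i, IsPathFrom adj C B (Qs i)) ∧ DisjointPaths Qs ∧
        Function.Injective (fun i => (Qs i).head?)) := by
  obtain ⟨Qs, hQs, hdisj, hinj⟩ := (isVertexCut_flip.mpr hcut).exists_disjointPaths_to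
    fun C' hC' => hmin C' (isVertexCut_flip.mp hC')
  refine ⟨hcut.exists_disjointPaths_to hmin, fun i => (Qs i).reverse,
    fun i => isPathFrom_reverse.mpr (hQs i), disjointPaths_reverse.mpr hdisj, ?_⟩
  simpa only [List.head?_reverse] using hinj

/-- if `C` is a minimum vertex cut of size `k` between disjoint sets `A` and
`B` in a directed graph, then there are `k` pairwise vertex-disjoint paths from `A` to `C`
(ending at distinct vertices of `C`), and `k` pairwise vertex-disjoint paths from `C` to
`B` (starting at distinct vertices of `C`). -/
theorem stmt9 {V : Type*} [Fintype V] [DecidableEq V] (adj : V → V → Prop)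
    (A B C : Finset V) (hAB : Disjoint A B)
    (hcut : IsVertexCut adj A B C)
    (hmin : ∀ C' : Finset V, IsVertexCut adj A B C' → C.card ≤ C'.card) :
    (∃ Ps : Fin C.card → List V,
      (∀ i, IsPathFrom adj A C (Ps i)) ∧ DisjointPaths Ps ∧
        Function.Injective (fun i => (Ps i).getLast?)) ∧
    (∃ Qs : Fin C.card → List V,
      (∀ i, IsPathFrom adj C B (Qs i)) ∧ DisjointPaths Qs ∧
        Function.Injective (fun i => (Qs i).head?)) :=
  stmt9_general adj A B C hcut hmin
end

section
/- Let $K$ be a clique on $2c$ vertices inside a graph $G$ such that all vertices of $K$ have identical neighborhoods outside $K$. Then no vertex cut of size at most $c$ between two vertices $a, b \notin K$ contains any vertex of $K$ unless it contains all of $K$; in particular, any minimal vertex cut of size at most $c$ between $a$ and $b$ is disjoint from $K$. -/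
/-- `C ⊆ V ∖ {a, b}` is a vertex cut between the vertices `a` and `b`. -/
def IsVertexCutPair {V : Type*} (adj : V → V → Prop) (a b : V) (C : Finset V) : Prop :=
  a ∉ C ∧ b ∉ C ∧ ¬ Reaches adj C a b

/-!
The vertices of `K` are interchangeable twins, so any path can be rerouted through a
single vertex `w ∈ K`: collapsing `K` onto `w` maps a path avoiding `C \ K` to a walk
avoiding `C` as soon as `w ∉ C`. Hence, if a cut `C` misses some vertex of `K`, then `C \ K`
is still a cut. A cut of size at most `c` cannot contain all `2c` vertices of `K`, so a
minimal one meeting `K` would properly contain the cut `C \ K`, which is absurd.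
-/

section TwinRetract

variable {V : Type*} [DecidableEq V]

def twinRetract (K : Finset V) (w x : V) : V := if x ∈ K then w else x

variable {adj : V → V → Prop} {K : Finset V} {w : V}

theorem twinRetract_of_mem {x : V} (hx : x ∈ K) : twinRetract K w x = w := if_pos hx

theorem twinRetract_of_notMem {x : V} (hx : x ∉ K) : twinRetract K w x = x := if_neg hx

theorem twinRetract_notMem {C : Finset V} (hw : w ∉ C) {x : V} (hx : x ∉ C \ K) :
    twinRetract K w x ∉ C := by
  by_cases hxK : x ∈ K
  · rwa [twinRetract_of_mem hxK]
  · rw [twinRetract_of_notMem hxK]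
    exact fun hxC => hx (Finset.mem_sdiff.mpr ⟨hxC, hxK⟩)

theorem twinRetract_eq_or_adj (hsymm : ∀ u v, adj u v ↔ adj v u)
    (hnbhd : ∀ u ∈ K, ∀ v ∈ K, ∀ x ∉ K, adj u x ↔ adj v x) (hw : w ∈ K)
    {x y : V} (hxy : adj x y) :
    twinRetract K w x = twinRetract K w y ∨ adj (twinRetract K w x) (twinRetract K w y) := by
  by_cases hxK : x ∈ K <;> by_cases hyK : y ∈ K
  · left
    rw [twinRetract_of_mem hxK, twinRetract_of_mem hyK]
  · right
    rw [twinRetract_of_mem hxK, twinRetract_of_notMem hyK]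
    exact (hnbhd x hxK w hw y hyK).mp hxy
  · right
    rw [twinRetract_of_notMem hxK, twinRetract_of_mem hyK, hsymm]
    exact (hnbhd y hyK w hw x hxK).mp ((hsymm x y).mp hxy)
  · right
    rwa [twinRetract_of_notMem hxK, twinRetract_of_notMem hyK]

theorem Reaches.map_twinRetract (hsymm : ∀ u v, adj u v ↔ adj v u)
    (hnbhd : ∀ u ∈ K, ∀ v ∈ K, ∀ x ∉ K, adj u x ↔ adj v x) (hwK : w ∈ K)
    {C : Finset V} (hwC : w ∉ C) {a b : V} (h : Reaches adj (C \ K) a b) :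
    Reaches adj C (twinRetract K w a) (twinRetract K w b) := by
  refine Relation.ReflTransGen.lift' (twinRetract K w) (fun x y ⟨hxy, hx, hy⟩ => ?_) a b h
  rcases twinRetract_eq_or_adj hsymm hnbhd hwK hxy with heq | hadj
  · rw [Function.onFun, heq]
  · exact .single ⟨hadj, twinRetract_notMem hwC hx, twinRetract_notMem hwC hy⟩

theorem IsVertexCutPair.sdiff_of_twins (hsymm : ∀ u v, adj u v ↔ adj v u)
    (hnbhd : ∀ u ∈ K, ∀ v ∈ K, ∀ x ∉ K, adj u x ↔ adj v x) {a b : V} (ha : a ∉ K)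
    (hb : b ∉ K) {C : Finset V} (hcut : IsVertexCutPair adj a b C) (hwK : w ∈ K)
    (hwC : w ∉ C) : IsVertexCutPair adj a b (C \ K) := by
  obtain ⟨haC, hbC, hsep⟩ := hcut
  refine ⟨fun h => haC (Finset.mem_sdiff.mp h).1, fun h => hbC (Finset.mem_sdiff.mp h).1,
    fun hre => hsep ?_⟩
  simpa only [twinRetract_of_notMem ha, twinRetract_of_notMem hb] using
    hre.map_twinRetract hsymm hnbhd hwK hwC

end TwinRetract

theorem stmt10_general {V : Type*} [DecidableEq V] (adj : V → V → Prop)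
    (hsymm : ∀ u v, adj u v ↔ adj v u) (c : ℕ) (K : Finset V)
    (hKcard : K.card = 2 * c)
    (hnbhd : ∀ u ∈ K, ∀ v ∈ K, ∀ x ∉ K, adj u x ↔ adj v x)
    (a b : V) (ha : a ∉ K) (hb : b ∉ K)
    (C : Finset V) (hcut : IsVertexCutPair adj a b C) (hsize : C.card ≤ c)
    (hminimal : ∀ C' ⊆ C, IsVertexCutPair adj a b C' → C' = C) :
    Disjoint C K := by
  by_contra hmeet
  obtain ⟨k, hkC, hkK⟩ := Finset.not_disjoint_iff.mp hmeet
  have hCK : C.card < K.card := by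
    have := Finset.card_pos.mpr ⟨k, hkC⟩
    omega
  obtain ⟨w, hwK, hwC⟩ := Finset.exists_mem_notMem_of_card_lt_card hCK
  have hsdiff := hminimal (C \ K) Finset.sdiff_subset
    (hcut.sdiff_of_twins hsymm hnbhd ha hb hwK hwC)
  exact (Finset.mem_sdiff.mp (hsdiff ▸ hkC)).2 hkK

/-- let `K` be a clique on `2c` vertices in a graph `G` such that all
vertices of `K` have identical neighborhoods outside `K`.  Then a vertex cut of size at
most `c` between `a, b ∉ K` cannot contain a vertex of `K` without containing all of `K`
(which is impossible since `|K| = 2c > c`); in particular, any minimal vertex cut of size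
at most `c` between `a` and `b` is disjoint from `K`. -/
theorem stmt10 {V : Type*} [Fintype V] [DecidableEq V] (adj : V → V → Prop)
    (hsymm : ∀ u v, adj u v ↔ adj v u) (c : ℕ) (K : Finset V)
    (hKcard : K.card = 2 * c)
    (hclique : ∀ u ∈ K, ∀ v ∈ K, u ≠ v → adj u v)
    (hnbhd : ∀ u ∈ K, ∀ v ∈ K, ∀ x ∉ K, adj u x ↔ adj v x)
    (a b : V) (ha : a ∉ K) (hb : b ∉ K) (hab : a ≠ b)
    (C : Finset V) (hcut : IsVertexCutPair adj a b C) (hsize : C.card ≤ c)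
    (hminimal : ∀ C' ⊆ C, IsVertexCutPair adj a b C' → C' = C) :
    Disjoint C K :=
  stmt10_general adj hsymm c K hKcard hnbhd a b ha hb C hcut hsize hminimal
end

section
/- Suppose a sequence of splits is applied to a piece with $T$ terminals, where each split removes a smaller side with $t_i$ terminals from the larger side and adds at most $2\phi\sigma t_i$ new terminals (to both pieces combined), with $\phi\sigma \le \frac{1}{10 \log n}$, and the larger side loses at least $t_i - \phi\sigma t_i \ge 4t_i/5$ terminals per split, continuing until the largest piece has at most $2T/3$ terminals. Then $\sum_i t_i \le 5T/4$, and the total number of new terminals added is at most $T/(4\log n)$. Consequently, after recursion of depth at most $\log_{3/2} n$, the total terminal count is at most $(1 + \frac{1}{4\log n})^{\log_{3/2} n} \cdot T = O(T)$. -/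
/-!
Each split lowers the terminal count of the larger side by at least `(4/5) tᵢ`, and that count
starts at `T` and stays nonnegative, so telescoping gives `∑ tᵢ ≤ 5T/4`; since each split
creates at most `2φσ tᵢ ≤ tᵢ / (5 log₂ n)` new terminals, at most `T / (4 log₂ n)` are created in
total. Over `log_{3/2} n` levels of recursion the blow-up factor is at most
`exp (log_{3/2} n / (4 log₂ n)) = exp (log 2 / (4 log (3/2)))`, and `log (3/2) ≥ 1/3` makes this
at most `2`.
-/

open Real

theorem Fin.sum_castSucc_sub_succ {M : Type*} [AddCommGroup M] {j : ℕ} (L : Fin (j + 1) → M) :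
    ∑ i : Fin j, (L i.castSucc - L i.succ) = L 0 - L (Fin.last j) := by
  induction j with
  | zero => simp
  | succ j ih =>
    have := ih (L ∘ Fin.castSucc)
    simp only [Function.comp_apply, Fin.castSucc_succ, Fin.castSucc_zero] at this
    rw [Fin.sum_univ_castSucc, this, Fin.succ_last]
    abel

theorem Fin.mul_sum_le_sub_last {j : ℕ} (c : ℝ) (L : Fin (j + 1) → ℝ) (t : Fin j → ℝ)
    (h : ∀ i : Fin j, L i.succ ≤ L i.castSucc - c * t i) :
    c * ∑ i, t i ≤ L 0 - L (Fin.last j) := by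
  rw [← Fin.sum_castSucc_sub_succ, Finset.mul_sum]
  exact Finset.sum_le_sum fun i _ => by linarith [h i]

theorem Real.one_add_rpow_le_exp_mul {x y : ℝ} (hx : 0 ≤ 1 + x) (hy : 0 ≤ y) :
    (1 + x) ^ y ≤ exp (x * y) := by
  rw [exp_mul]
  exact rpow_le_rpow hx (by linarith [add_one_le_exp x]) hy

theorem Real.one_add_inv_four_logb_rpow_logb_le_two {n : ℝ} (hn : 1 < n) :
    (1 + 1 / (4 * logb 2 n)) ^ logb (3 / 2) n ≤ 2 := by
  have hlog_n : 0 < log n := log_pos hn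
  have hlogb : 0 < logb 2 n := logb_pos one_lt_two hn
  have hlog_two : 0 < log 2 := log_pos one_lt_two
  have hlog_three_halves : 1 / 3 ≤ log (3 / 2) := by
    have := one_sub_inv_le_log_of_pos (x := 3 / 2) (by norm_num)
    norm_num at this ⊢
    linarith
  have hexponent : 1 / (4 * logb 2 n) * logb (3 / 2) n = log 2 / (4 * log (3 / 2)) := by
    simp only [logb]
    field_simp
  calc (1 + 1 / (4 * logb 2 n)) ^ logb (3 / 2) n
      ≤ exp (log 2 / (4 * log (3 / 2))) := by
        rw [← hexponent]
        exact one_add_rpow_le_exp_mul (by positivity) (logb_pos (by norm_num) hn).le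
    _ ≤ exp (log 2) := by
        gcongr
        rw [div_le_iff₀ (by positivity)]
        nlinarith
    _ = 2 := exp_log two_pos

theorem stmt12_general (n : ℝ) (hn : 2 ≤ n) (T : ℝ) (hT : 0 ≤ T)
    (φ σ : ℝ) (hφσ : φ * σ ≤ 1 / (10 * Real.logb 2 n))
    (j : ℕ) (t : Fin j → ℝ) (ht : ∀ i, 0 ≤ t i)
    (L : Fin (j + 1) → ℝ) (hL0 : L 0 = T) (hLnonneg : ∀ i, 0 ≤ L i)
    (hdec : ∀ i : Fin j, L i.succ ≤ L i.castSucc - (4 / 5) * t i) :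
    (∑ i, t i ≤ 5 * T / 4) ∧
    (∑ i, 2 * (φ * σ) * t i ≤ T / (4 * Real.logb 2 n)) ∧
    (1 + 1 / (4 * Real.logb 2 n)) ^ (Real.logb (3 / 2) n) * T ≤ 2 * T := by
  have hlogb : 0 < logb 2 n := logb_pos one_lt_two (by linarith)
  have hsum : ∑ i, t i ≤ 5 * T / 4 := by
    have := Fin.mul_sum_le_sub_last _ L t hdec
    linarith [hLnonneg (Fin.last j)]
  refine ⟨hsum, ?_, ?_⟩
  · calc ∑ i, 2 * (φ * σ) * t i = 2 * (φ * σ) * ∑ i, t i := by rw [Finset.mul_sum]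
      _ ≤ 2 * (1 / (10 * logb 2 n)) * (5 * T / 4) :=
        mul_le_mul (by linarith) hsum (Finset.sum_nonneg fun i _ => ht i) (by positivity)
      _ = T / (4 * logb 2 n) := by field_simp; ring
  · exact mul_le_mul_of_nonneg_right (one_add_inv_four_logb_rpow_logb_le_two (by linarith)) hT

/-- charging argument for the expander-decomposition-style partition.  A
piece starting with `T` terminals undergoes splits; the `i`-th split removes a smaller
side with `t i` terminals, the larger side losing at least `(4/5) t i` terminals, and at
most `2φσ·(t i)` new terminals are created, where `φσ ≤ 1/(10 log n)`.  Then
`∑ᵢ t i ≤ 5T/4`, the total number of new terminals is at most `T/(4 log n)`, and the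
recursion (of depth `log_{3/2} n`) blows the terminal count up by at most the factor
`(1 + 1/(4 log n))^{log_{3/2} n} ≤ 2`, i.e. `O(T)` terminals overall. -/
theorem stmt12 (n : ℝ) (hn : 2 ≤ n) (T : ℝ) (hT : 0 ≤ T)
    (φ σ : ℝ) (hφσ0 : 0 ≤ φ * σ) (hφσ : φ * σ ≤ 1 / (10 * Real.logb 2 n))
    (j : ℕ) (t : Fin j → ℝ) (ht : ∀ i, 0 ≤ t i)
    (L : Fin (j + 1) → ℝ) (hL0 : L 0 = T) (hLnonneg : ∀ i, 0 ≤ L i)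
    (hdec : ∀ i : Fin j, L i.succ ≤ L i.castSucc - (4 / 5) * t i) :
    (∑ i, t i ≤ 5 * T / 4) ∧
    (∑ i, 2 * (φ * σ) * t i ≤ T / (4 * Real.logb 2 n)) ∧
    (1 + 1 / (4 * Real.logb 2 n)) ^ (Real.logb (3 / 2) n) * T ≤ 2 * T :=
  stmt12_general n hn T hT φ σ hφσ j t ht L hL0 hLnonneg hdec
end

section
/- Let $G$ be a graph with terminal set $\mathcal{T}$ and let $F \subseteq E(G)$ cover all $c$-cuts. Let $H$ be obtained from $G$ by contracting every edge not in $F$. Then $H$ is $(\mathcal{T}, c)$-equivalent to $G$, and $|E(H)| \le |F|$. -/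
open Finset

/-- A multigraph is given by an edge type `E` and an endpoint map `ε : E → V × V`.
`eCut ε S` is the set of edges with exactly one endpoint in `S`. -/
def eCut {V E : Type*} [Fintype E] [DecidableEq V] (ε : E → V × V) (S : Finset V) :
    Finset E :=
  univ.filter (fun e => ((ε e).1 ∈ S ∧ (ε e).2 ∉ S) ∨ ((ε e).1 ∉ S ∧ (ε e).2 ∈ S))

/-- Minimum number of edges in a cut separating `A` from `B` (`⊤` if no such cut exists,
e.g. if `A` and `B` intersect). -/
noncomputable def mincutE {V E : Type*} [Fintype E] [DecidableEq V]
    (ε : E → V × V) (A B : Finset V) : ℕ∞ :=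
  sInf {n : ℕ∞ | ∃ S : Finset V, A ⊆ S ∧ Disjoint B S ∧ ((eCut ε S).card : ℕ∞) = n}

/-- `F` covers all `c`-cuts: for every terminal side `S ⊆ 𝒯` whose mincut is at most `c`,
some minimum cut between `S` and `𝒯 ∖ S` consists solely of edges of `F`. -/
def CoversAll {V E : Type*} [Fintype E] [DecidableEq V] [DecidableEq E]
    (c : ℕ) (ε : E → V × V) (𝒯 : Finset V) (F : Finset E) : Prop :=
  ∀ S ⊆ 𝒯, mincutE ε S (𝒯 \ S) ≤ (c : ℕ∞) →
    ∃ S' : Finset V, S ⊆ S' ∧ Disjoint (𝒯 \ S) S' ∧ eCut ε S' ⊆ F ∧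
      ((eCut ε S').card : ℕ∞) = mincutE ε S (𝒯 \ S)

/-!
Contracting an edge outside `F` never destroys a cut of `H`: the preimage of a side of a cut of
`H` is a side of a cut of `G` with the same edges, so mincuts can only grow under contraction.
Conversely, a minimum cut of `G` made of edges of `F` has no contracted edge crossing it, so its
side is a union of contraction classes and maps to a cut of `H` of the same size. For terminal
sides with mincut at most `c` such a cut exists by the covering property; above `c` both sides of
the truncated equality are `c`.
-/

section Contraction

variable {V E V' : Type*} [Fintype E] [DecidableEq V] [DecidableEq V']
  {ε : E → V × V} {F : Finset E} {f : V → V'} {εH : F → V' × V'}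

theorem mincutE_le_card_eCut {A B S : Finset V} (hA : A ⊆ S) (hB : Disjoint B S) :
    mincutE ε A B ≤ (eCut ε S).card :=
  sInf_le ⟨S, hA, hB, rfl⟩

theorem mem_iff_mem_of_eqvGen {S : Finset V} (hcut : eCut ε S ⊆ F) {a b : V}
    (hab : Relation.EqvGen (fun u v => ∃ e ∉ F, ε e = (u, v) ∨ ε e = (v, u)) a b) :
    a ∈ S ↔ b ∈ S := by
  induction hab with
  | rel u v huv =>
    obtain ⟨e, heF, he | he⟩ := huv <;>
    · have hnot : e ∉ eCut ε S := fun hmem => heF (hcut hmem)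
      simp only [eCut, mem_filter, mem_univ, true_and, he] at hnot
      tauto
  | refl => rfl
  | symm _ _ _ ih => exact ih.symm
  | trans _ _ _ _ _ ih₁ ih₂ => exact ih₁.trans ih₂

variable [Fintype V] [DecidableEq E]

theorem eCut_filter_mem_eq_image_val (hcontr : ∀ e ∉ F, f (ε e).1 = f (ε e).2)
    (hεH : ∀ e : F, εH e = (f (ε e.1).1, f (ε e.1).2)) (S : Finset V') :
    eCut ε (univ.filter fun v => f v ∈ S) = (eCut εH S).image Subtype.val := by
  ext e
  simp only [eCut, mem_filter, mem_univ, true_and, mem_image, Subtype.exists, hεH,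
    exists_and_right, exists_eq_right]
  constructor
  · intro he
    have heF : e ∈ F := by
      by_contra heF
      rw [hcontr e heF] at he
      tauto
    exact ⟨heF, he⟩
  · exact fun ⟨_, he⟩ => he

theorem mincutE_le_mincutE_contract (hcontr : ∀ e ∉ F, f (ε e).1 = f (ε e).2)
    (hεH : ∀ e : F, εH e = (f (ε e.1).1, f (ε e.1).2)) (A B : Finset V) :
    mincutE ε A B ≤ mincutE εH (A.image f) (B.image f) := by
  refine le_sInf ?_
  rintro _ ⟨S, hA, hB, rfl⟩
  have hcard : (eCut ε (univ.filter fun v => f v ∈ S)).card = (eCut εH S).card := by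
    rw [eCut_filter_mem_eq_image_val hcontr hεH, card_image_of_injective _ Subtype.val_injective]
  refine hcard ▸ mincutE_le_card_eCut (fun v hv => ?_) (disjoint_left.2 fun v hv hvS => ?_)
  · simpa using hA (mem_image_of_mem f hv)
  · exact disjoint_left.1 hB (mem_image_of_mem f hv) (by simpa using hvS)

theorem mincutE_contract_le_card_eCut (hcontr : ∀ e ∉ F, f (ε e).1 = f (ε e).2)
    (hεH : ∀ e : F, εH e = (f (ε e.1).1, f (ε e.1).2)) {A B S : Finset V}
    (hsat : ∀ u v, f u = f v → u ∈ S → v ∈ S) (hA : A ⊆ S) (hB : Disjoint B S) :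
    mincutE εH (A.image f) (B.image f) ≤ (eCut ε S).card := by
  have hpre : (univ.filter fun v => f v ∈ S.image f) = S := by
    ext v
    simp only [mem_filter, mem_univ, true_and, mem_image]
    exact ⟨fun ⟨u, hu, huv⟩ => hsat u v huv hu, fun hv => ⟨v, hv, rfl⟩⟩
  have hcard : (eCut εH (S.image f)).card = (eCut ε S).card := by
    rw [← card_image_of_injective _ Subtype.val_injective,
      ← eCut_filter_mem_eq_image_val hcontr hεH, hpre]
  refine hcard ▸ mincutE_le_card_eCut (image_subset_image hA) (disjoint_left.2 ?_)
  rintro _ hfb hfs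
  obtain ⟨b, hb, rfl⟩ := mem_image.1 hfb
  obtain ⟨s, hs, hsb⟩ := mem_image.1 hfs
  exact disjoint_left.1 hB hb (hsat s b hsb hs)

end Contraction

theorem stmt14_general {V E V' : Type*} [Fintype V] [Fintype E] [DecidableEq V] [DecidableEq E]
    [DecidableEq V']
    (ε : E → V × V) (𝒯 : Finset V) (c : ℕ) (F : Finset E)
    (hF : CoversAll c ε 𝒯 F)
    (f : V → V')
    (hf : ∀ a b : V, f a = f b ↔
      Relation.EqvGen (fun u v => ∃ e ∉ F, ε e = (u, v) ∨ ε e = (v, u)) a b)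
    (εH : F → V' × V') (hεH : ∀ e : F, εH e = (f (ε e.1).1, f (ε e.1).2)) :
    (∀ S ⊆ 𝒯, min (mincutE ε S (𝒯 \ S)) (c : ℕ∞) =
        min (mincutE εH (S.image f) ((𝒯 \ S).image f)) (c : ℕ∞)) ∧
      Fintype.card F ≤ F.card := by
  refine ⟨fun S hS => ?_, (Fintype.card_coe F).le⟩
  have hcontr : ∀ e ∉ F, f (ε e).1 = f (ε e).2 :=
    fun e he => (hf _ _).2 (.rel _ _ ⟨e, he, .inl rfl⟩)
  have hle := mincutE_le_mincutE_contract hcontr hεH S (𝒯 \ S)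
  rcases le_or_gt (mincutE ε S (𝒯 \ S)) c with hc | hc
  · obtain ⟨S', hSS', hdis, hcut, hcard⟩ := hF S hS hc
    have hsat : ∀ u v, f u = f v → u ∈ S' → v ∈ S' :=
      fun u v huv => (mem_iff_mem_of_eqvGen hcut ((hf u v).1 huv)).1
    rw [le_antisymm hle (hcard ▸ mincutE_contract_le_card_eCut hcontr hεH hsat hSS' hdis)]
  · rw [min_eq_right hc.le, min_eq_right (hc.le.trans hle)]

/-- let `F ⊆ E(G)` cover all `c`-cuts of `G` with respect to `𝒯`, and let `H`
be obtained from `G` by contracting every edge not in `F`.  Contraction is modelled by a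
surjection `f : V → V'` whose fibers are exactly the classes of the equivalence relation
generated by the edges outside `F`; the edges of `H` are the edges of `F` with their mapped
endpoints.  Then `H` is `(𝒯, c)`-equivalent to `G`, and `|E(H)| ≤ |F|`. -/
theorem stmt14 {V E V' : Type*} [Fintype V] [Fintype E] [DecidableEq V] [DecidableEq E]
    [Fintype V'] [DecidableEq V']
    (ε : E → V × V) (𝒯 : Finset V) (c : ℕ) (F : Finset E)
    (hF : CoversAll c ε 𝒯 F)
    (f : V → V') (hsurj : Function.Surjective f)
    (hf : ∀ a b : V, f a = f b ↔
      Relation.EqvGen (fun u v => ∃ e ∉ F, ε e = (u, v) ∨ ε e = (v, u)) a b)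
    (εH : F → V' × V') (hεH : ∀ e : F, εH e = (f (ε e.1).1, f (ε e.1).2)) :
    (∀ S ⊆ 𝒯, min (mincutE ε S (𝒯 \ S)) (c : ℕ∞) =
        min (mincutE εH (S.image f) ((𝒯 \ S).image f)) (c : ℕ∞)) ∧
      Fintype.card F ≤ F.card :=
  stmt14_general ε 𝒯 c F hF f hf εH hεH
end
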